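/- arXiv:2312.14881 — 2 statements merged into one kernel-verified Lean document; each statement's English description precedes it below -/
import Mathlib

section
/- Let s, t ≥ 1 be integers and let m = 2^ℓ for some integer ℓ ≥ 1. Then the complete multipartite graph K_{s,t,s,t,...,s,t} with m parts (m/2 parts of size s and m/2 parts of size t, alternating) is interval colorable, i.e., μ_int(K_{s,t,...,s,t}) = 1. -/
/-- An (improper) interval edge coloring: for every vertex, the set of colors on
incident edges forms an interval of consecutive integers. -/
def IsIntervalColoring {V : Type*} (G : SimpleGraph V) (c : Sym2 V → ℤ) : Prop :=
  ∀ v : V, ∀ a b x : ℤ,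
    (∃ u, G.Adj v u ∧ c s(v, u) = a) → (∃ u, G.Adj v u ∧ c s(v, u) = b) →
    a ≤ x → x ≤ b → ∃ u, G.Adj v u ∧ c s(v, u) = x

/-- A coloring is `k`-improper if at every vertex each color appears on at most
`k` incident edges. -/
def IsKImproper {V : Type*} (G : SimpleGraph V) (c : Sym2 V → ℤ) (k : ℕ) : Prop :=
  ∀ v : V, ∀ q : ℤ, ({u : V | G.Adj v u ∧ c s(v, u) = q}).ncard ≤ k

/-- The interval coloring impropriety `μ_int(G)`: the least `k` such that `G`
admits a `k`-improper interval edge coloring. -/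
noncomputable def impropriety {V : Type*} (G : SimpleGraph V) : ℕ :=
  sInf {k : ℕ | ∃ c : Sym2 V → ℤ, IsIntervalColoring G c ∧ IsKImproper G c k}

/-- The maximum degree of a graph. -/
noncomputable def maxDeg {V : Type*} (G : SimpleGraph V) : ℕ :=
  sSup {d : ℕ | ∃ v : V, (G.neighborSet v).ncard = d}

/-!
Number the parts `0, …, m - 1` with `m = 2 ^ ℓ`; part `q` has `s` or `t` vertices according to
the parity of `q`. Seen from part `q`, list all vertices `(r, j)` by `q ^^^ r` first and `j`
second, and let `pos_q (r, j)` be the rank in this list. As `r ↦ q ^^^ r` permutes the parts and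
sends only `q` to `0`, the neighbours of a vertex of part `q` fill exactly the ranks from
`|part q|` up to the end. The edge `(q, i) (r, j)` gets colour `pos_q (r, j) + i - |part q|`,
so at `(q, i)` the colours are distinct and form an interval.

This colour is symmetric in the two endpoints: with `d = q ^^^ r`, the rank `pos_q (r, 0)` is
`⌊d / 2⌋ (s + t)`, plus `|part q|` when `d` is odd, because the parts `q ^^^ 2k` and
`q ^^^ (2k + 1)` have opposite parities. So for odd `d` the colour is `⌊d / 2⌋ (s + t) + i + j`,
and for even `d` the parts `q` and `r` have the same size.
-/

open Finset

section IntervalColoring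

variable {V : Type*} {G : SimpleGraph V} {c : Sym2 V → ℤ}

theorem isIntervalColoring_of_ordConnected
    (h : ∀ v, ((fun u => c s(v, u)) '' G.neighborSet v).OrdConnected) : IsIntervalColoring G c :=
  fun v _ _ _ ha hb hax hxb => (h v).out ha hb ⟨hax, hxb⟩

theorem isKImproper_one_of_injOn (h : ∀ v, Set.InjOn (fun u => c s(v, u)) (G.neighborSet v)) :
    IsKImproper G c 1 :=
  fun v q => by
    have hsub : {u | G.Adj v u ∧ c s(v, u) = q}.Subsingleton :=
      fun _ hu _ hw => h v hu.1 hw.1 (hu.2.trans hw.2.symm)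
    exact (Set.ncard_le_one hsub.finite).2 hsub

theorem impropriety_eq_one [Finite V] (hG : G ≠ ⊥) (hc : IsIntervalColoring G c)
    (hc₁ : IsKImproper G c 1) : impropriety G = 1 := by
  refine le_antisymm (Nat.sInf_le ⟨c, hc, hc₁⟩) (le_csInf ⟨1, c, hc, hc₁⟩ ?_)
  rintro k ⟨c', -, hk⟩
  obtain ⟨v, u, huv⟩ := SimpleGraph.ne_bot_iff_exists_adj.1 hG
  have hu : ({w | G.Adj v w ∧ c' s(v, w) = c' s(v, u)} : Set V).Nonempty := ⟨u, huv, rfl⟩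
  exact ((Set.ncard_pos (Set.toFinite _)).2 hu).trans_le (hk v _)

end IntervalColoring

section PrefixSums

variable (f : ℕ → ℕ)

theorem sum_range_add_lt_sum_range {d d' j : ℕ} (hj : j < f d) (hd : d < d') :
    ∑ e ∈ range d, f e + j < ∑ e ∈ range d', f e :=
  calc ∑ e ∈ range d, f e + j < ∑ e ∈ range (d + 1), f e := by rw [sum_range_succ]; omega
    _ ≤ ∑ e ∈ range d', f e := sum_le_sum_of_subset (range_subset_range.2 hd)

theorem sum_range_add_inj {d d' j j' : ℕ} (hj : j < f d) (hj' : j' < f d')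
    (h : ∑ e ∈ range d, f e + j = ∑ e ∈ range d', f e + j') : d = d' ∧ j = j' := by
  obtain hd | rfl | hd := lt_trichotomy d d'
  · have := sum_range_add_lt_sum_range f hj hd; omega
  · omega
  · have := sum_range_add_lt_sum_range f hj' hd; omega

theorem exists_sum_range_add_eq {D x : ℕ} (hx : x < ∑ e ∈ range D, f e) :
    ∃ d < D, ∃ j < f d, ∑ e ∈ range d, f e + j = x := by
  induction D with
  | zero => simp at hx
  | succ D ih =>
    by_cases h : x < ∑ e ∈ range D, f e
    · obtain ⟨d, hd, j, hj, rfl⟩ := ih h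
      exact ⟨d, by omega, j, hj, rfl⟩
    · rw [sum_range_succ] at hx
      exact ⟨D, by omega, x - ∑ e ∈ range D, f e, by omega, by omega⟩

end PrefixSums

section PartSizes

variable (s t : ℕ)

def partSize (q : ℕ) : ℕ := if q % 2 = 0 then s else t

theorem partSize_xor_even (q k : ℕ) : partSize s t (q ^^^ (2 * k)) = partSize s t q := by
  unfold partSize; rw [Nat.xor_mod_two_eq]; split_ifs <;> omega

theorem partSize_add_partSize_xor_odd (q k : ℕ) :
    partSize s t q + partSize s t (q ^^^ (2 * k + 1)) = s + t := by
  unfold partSize; rw [Nat.xor_mod_two_eq]; split_ifs <;> omega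

def xorOffset (q d : ℕ) : ℕ := ∑ e ∈ range d, partSize s t (q ^^^ e)

theorem xorOffset_two_mul (q k : ℕ) : xorOffset s t q (2 * k) = k * (s + t) := by
  induction k with
  | zero => simp [xorOffset]
  | succ k ih =>
    rw [xorOffset, show 2 * (k + 1) = 2 * k + 1 + 1 by ring, sum_range_succ, sum_range_succ,
      ← xorOffset, ih, add_assoc, partSize_xor_even, partSize_add_partSize_xor_odd]
    ring

theorem xorOffset_two_mul_add_one (q k : ℕ) :
    xorOffset s t q (2 * k + 1) = k * (s + t) + partSize s t q := by
  rw [xorOffset, sum_range_succ, ← xorOffset, xorOffset_two_mul, partSize_xor_even]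

theorem xorOffset_sub_partSize_xor (q d : ℕ) :
    (xorOffset s t q d : ℤ) - partSize s t q =
      xorOffset s t (q ^^^ d) d - partSize s t (q ^^^ d) := by
  obtain ⟨k, rfl | rfl⟩ := Nat.even_or_odd' d
  · rw [xorOffset_two_mul, xorOffset_two_mul, partSize_xor_even]
  · rw [xorOffset_two_mul_add_one, xorOffset_two_mul_add_one]
    push_cast
    ring

theorem partSize_le_xorOffset (q : ℕ) {d : ℕ} (hd : d ≠ 0) :
    partSize s t q ≤ xorOffset s t q d :=
  calc partSize s t q = xorOffset s t q 1 := by simp [xorOffset]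
    _ ≤ xorOffset s t q d := sum_le_sum_of_subset (range_subset_range.2 (by omega))

end PartSizes

abbrev alternatingMultipartiteGraph (s t ℓ : ℕ) :
    SimpleGraph (Σ i : Fin (2 ^ ℓ), Fin (partSize s t i)) :=
  SimpleGraph.completeMultipartiteGraph fun i : Fin (2 ^ ℓ) => Fin (partSize s t i)

section XorColoring

variable {s t ℓ : ℕ}

def xorPosition (q : ℕ) (u : Σ i : Fin (2 ^ ℓ), Fin (partSize s t i)) : ℕ :=
  xorOffset s t q (q ^^^ u.1) + u.2

theorem xorPosition_injective (q : ℕ) :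
    Function.Injective (xorPosition (s := s) (t := t) (ℓ := ℓ) q) := by
  rintro ⟨⟨r, hr⟩, j, hj⟩ ⟨⟨r', hr'⟩, j', hj'⟩ h
  have hj₁ : j < partSize s t (q ^^^ (q ^^^ r)) := by rwa [Nat.xor_xor_cancel_left]
  have hj₁' : j' < partSize s t (q ^^^ (q ^^^ r')) := by rwa [Nat.xor_xor_cancel_left]
  obtain ⟨hrr, rfl⟩ := sum_range_add_inj (fun e => partSize s t (q ^^^ e)) hj₁ hj₁' h
  obtain rfl : r = r' := Nat.xor_right_injective hrr
  rfl

theorem bijOn_xorPosition (q : Fin (2 ^ ℓ)) :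
    Set.BijOn (xorPosition (s := s) (t := t) q) {u | u.1 ≠ q}
      (Set.Ico (partSize s t q) (xorOffset s t q (2 ^ ℓ))) := by
  refine ⟨?_, (xorPosition_injective q).injOn, ?_⟩
  · rintro ⟨r, j, hj⟩ (hr : r ≠ q)
    rw [← Nat.xor_xor_cancel_left q r] at hj
    have hd : (q : ℕ) ^^^ r ≠ 0 := by simpa [Nat.xor_eq_zero_iff, Fin.val_inj] using hr.symm
    exact ⟨(partSize_le_xorOffset s t q hd).trans (Nat.le_add_right _ _),
      sum_range_add_lt_sum_range (fun e => partSize s t (q ^^^ e)) hj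
        (Nat.xor_lt_two_pow q.2 r.2)⟩
  · rintro x ⟨hlo, hhi⟩
    obtain ⟨d, hd, j, hj, rfl⟩ := exists_sum_range_add_eq (fun e => partSize s t (q ^^^ e)) hhi
    have hd0 : d ≠ 0 := by
      rintro rfl
      simp only [Nat.xor_zero, range_zero, sum_empty, zero_add] at hj hlo
      omega
    refine ⟨⟨⟨q ^^^ d, Nat.xor_lt_two_pow q.2 hd⟩, j, hj⟩, ?_, ?_⟩
    · intro h
      exact hd0 (by simpa using congrArg Fin.val h)
    · simp [xorPosition, xorOffset]

def xorColoring (s t ℓ : ℕ) : Sym2 (Σ i : Fin (2 ^ ℓ), Fin (partSize s t i)) → ℤ :=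
  Sym2.lift ⟨fun v u => (xorPosition v.1 u : ℤ) + v.2 - partSize s t v.1, fun v u => by
    have h := xorOffset_sub_partSize_xor s t v.1 (v.1 ^^^ u.1)
    rw [Nat.xor_xor_cancel_left] at h
    simp only [xorPosition, Nat.xor_comm (u.1 : ℕ) v.1]
    push_cast
    linarith⟩

theorem bijOn_natCast_add_Ico (a b : ℕ) (c : ℤ) :
    Set.BijOn (fun n : ℕ => (n : ℤ) + c) (Set.Ico a b) (Set.Ico (a + c) (b + c)) := by
  refine ⟨fun n hn => ?_, fun n _ n' _ h => by simpa using h, fun y hy => ?_⟩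
  · simp only [Set.mem_Ico] at hn ⊢; omega
  · simp only [Set.mem_Ico] at hy
    exact ⟨(y - c).toNat, by simp only [Set.mem_Ico]; omega, by simp only; omega⟩

theorem bijOn_xorColoring (v : Σ i : Fin (2 ^ ℓ), Fin (partSize s t i)) :
    Set.BijOn (fun u => xorColoring s t ℓ s(v, u))
      ((alternatingMultipartiteGraph s t ℓ).neighborSet v)
      (Set.Ico (v.2 : ℤ) (v.2 + xorOffset s t v.1 (2 ^ ℓ) - partSize s t v.1)) := by
  have h := (bijOn_natCast_add_Ico _ _ ((v.2 : ℤ) - partSize s t v.1)).comp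
    (bijOn_xorPosition (s := s) (t := t) v.1)
  convert h using 1
  · ext u
    simp only [xorColoring, Sym2.lift_mk, Function.comp_apply]
    ring
  · ext u
    exact ne_comm
  · congr 1 <;> ring

theorem isIntervalColoring_xorColoring :
    IsIntervalColoring (alternatingMultipartiteGraph s t ℓ) (xorColoring s t ℓ) :=
  isIntervalColoring_of_ordConnected fun v =>
    (bijOn_xorColoring v).image_eq ▸ Set.ordConnected_Ico

theorem isKImproper_xorColoring :
    IsKImproper (alternatingMultipartiteGraph s t ℓ) (xorColoring s t ℓ) 1 :=
  isKImproper_one_of_injOn fun v => (bijOn_xorColoring v).injOn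

end XorColoring

theorem alternatingMultipartiteGraph_ne_bot {s t ℓ : ℕ} (hs : 1 ≤ s) (ht : 1 ≤ t) (hℓ : 1 ≤ ℓ) :
    alternatingMultipartiteGraph s t ℓ ≠ ⊥ := by
  have hm : 1 < 2 ^ ℓ := Nat.one_lt_two_pow (by omega)
  refine SimpleGraph.ne_bot_iff_exists_adj.2
    ⟨⟨⟨0, by omega⟩, ⟨0, show 0 < s by omega⟩⟩, ⟨⟨1, hm⟩, ⟨0, show 0 < t by omega⟩⟩, ?_⟩
  simp [Fin.ext_iff]

/-- Let `s, t ≥ 1` and `m = 2^ℓ` with `ℓ ≥ 1`.  The complete multipartite graph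
`K_{s,t,s,t,…,s,t}` with `m` parts (`m/2` parts of size `s` and `m/2` of size `t`,
alternating) is interval colorable, i.e. its impropriety equals `1`. -/
theorem stmt1 (s t : ℕ) (hs : 1 ≤ s) (ht : 1 ≤ t) (ℓ : ℕ) (hℓ : 1 ≤ ℓ) :
    impropriety (SimpleGraph.completeMultipartiteGraph
      fun i : Fin (2 ^ ℓ) => Fin (if i.val % 2 = 0 then s else t)) = 1 :=
  impropriety_eq_one (alternatingMultipartiteGraph_ne_bot hs ht hℓ) isIntervalColoring_xorColoring
    isKImproper_xorColoring
end

section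
/- For any graph G and any integer k ≥ 1, if H is the path P_k on k vertices, then μ_int(G ⊙ H) ≤ max{2, μ_int(G)}. -/
/-- The corona product `G ⊙ H`: take `G` and one copy of `H` for every vertex
of `G`, joining each vertex `v` of `G` to all vertices of its copy of `H`. -/
def corona {V W : Type*} (G : SimpleGraph V) (H : SimpleGraph W) :
    SimpleGraph (V ⊕ V × W) where
  Adj x y :=
    match x, y with
    | Sum.inl u, Sum.inl v => G.Adj u v
    | Sum.inl u, Sum.inr p => u = p.1
    | Sum.inr p, Sum.inl u => u = p.1
    | Sum.inr p, Sum.inr q => p.1 = q.1 ∧ H.Adj p.2 q.2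
  symm := by
    constructor
    rintro (u | p) (v | q) h
    · exact h.symm
    · exact h
    · exact h
    · exact ⟨h.1.symm, h.2.symm⟩
  loopless := by
    constructor
    rintro (u | p) h
    · exact G.irrefl h
    · exact H.irrefl h.2

/-!
Take a `μ`-improper interval coloring `c` of `G` and let `a v` be the least color at `v`. The
spoke from `v` to the `i`-th vertex of its path gets color `a v - 1 - ⌊i / 2⌋`, so the spokes
extend the interval at `v` downwards, using each new color twice; a path edge gets one less than
the larger spoke color at its ends. A path vertex with spoke color `f` then sees only the colors
`f` and `f - 1`, each at most twice.
-/

open Sum SimpleGraph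

section IntervalColoring

variable {V : Type*} (G : SimpleGraph V) (c : Sym2 V → ℤ)

def colorsAt (v : V) : Set ℤ :=
  (fun u => c s(v, u)) '' G.neighborSet v

@[simp]
theorem mem_colorsAt {v : V} {z : ℤ} :
    z ∈ colorsAt G c v ↔ ∃ u, G.Adj v u ∧ c s(v, u) = z :=
  Iff.rfl

theorem isIntervalColoring_iff_ordConnected :
    IsIntervalColoring G c ↔ ∀ v, (colorsAt G c v).OrdConnected :=
  ⟨fun h v => ⟨fun a ha b hb _ hx => h v a b _ ha hb hx.1 hx.2⟩,
    fun h v _ _ _ ha hb h₁ h₂ => (h v).out ha hb ⟨h₁, h₂⟩⟩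

noncomputable def minColor (v : V) : ℤ :=
  sInf (colorsAt G c v)

variable {G c}

theorem impropriety_le {k : ℕ} (hc : IsIntervalColoring G c) (hk : IsKImproper G c k) :
    impropriety G ≤ k :=
  Nat.sInf_le ⟨c, hc, hk⟩

variable [Finite V]

theorem finite_colorsAt (v : V) : (colorsAt G c v).Finite :=
  (Set.toFinite _).image _

theorem minColor_le {v : V} {z : ℤ} (h : z ∈ colorsAt G c v) : minColor G c v ≤ z :=
  csInf_le (finite_colorsAt v).bddBelow h

theorem minColor_mem {v : V} (h : (colorsAt G c v).Nonempty) :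
    minColor G c v ∈ colorsAt G c v :=
  h.csInf_mem (finite_colorsAt v)

variable (G)

theorem exists_isIntervalColoring_isKImproper_impropriety :
    ∃ c, IsIntervalColoring G c ∧ IsKImproper G c (impropriety G) :=
  Nat.sInf_mem (s := {k | ∃ c, IsIntervalColoring G c ∧ IsKImproper G c k})
    ⟨Nat.card V, fun _ => 0, fun _ _ _ _ ⟨u, hu, _⟩ _ _ _ => ⟨u, hu, by omega⟩,
      fun _ _ => Set.ncard_le_card _⟩

end IntervalColoring

theorem Set.ncard_le_two_of_injOn_bool {α : Type*} {s : Set α} {f : α → Bool}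
    (hf : Set.InjOn f s) : s.ncard ≤ 2 := by
  simpa using Set.ncard_le_ncard_of_injOn f (fun _ _ => Set.mem_univ _) hf

section CoronaAdj

variable {V W : Type*} {G : SimpleGraph V} {H : SimpleGraph W}

@[simp]
theorem corona_adj_inl_inl {u v : V} : (corona G H).Adj (inl u) (inl v) ↔ G.Adj u v :=
  Iff.rfl

@[simp]
theorem corona_adj_inl_inr {u : V} {p : V × W} : (corona G H).Adj (inl u) (inr p) ↔ u = p.1 :=
  Iff.rfl

@[simp]
theorem corona_adj_inr_inl {u : V} {p : V × W} : (corona G H).Adj (inr p) (inl u) ↔ u = p.1 :=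
  Iff.rfl

@[simp]
theorem corona_adj_inr_inr {p q : V × W} :
    (corona G H).Adj (inr p) (inr q) ↔ p.1 = q.1 ∧ H.Adj p.2 q.2 :=
  Iff.rfl

end CoronaAdj

section CoronaPath

variable {V : Type*} (G : SimpleGraph V) (c : Sym2 V → ℤ) (k : ℕ)

noncomputable def spokeColor (p : V × Fin k) : ℤ :=
  minColor G c p.1 - 1 - (p.2 : ℕ) / 2

noncomputable def coronaColoring : Sym2 (V ⊕ V × Fin k) → ℤ :=
  Sym2.lift ⟨fun x y => match x, y with
    | inl u, inl v => c s(u, v)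
    | inl _, inr p | inr p, inl _ => spokeColor G c k p
    | inr p, inr q => max (spokeColor G c k p) (spokeColor G c k q) - 1,
    by rintro (u | p) (v | q) <;> simp only [Sym2.eq_swap, max_comm]⟩

variable {G c k}

@[simp]
theorem coronaColoring_inl_inl (u v : V) : coronaColoring G c k s(inl u, inl v) = c s(u, v) :=
  rfl

@[simp]
theorem coronaColoring_inl_inr (u : V) (p : V × Fin k) :
    coronaColoring G c k s(inl u, inr p) = spokeColor G c k p :=
  rfl

@[simp]
theorem coronaColoring_inr_inl (u : V) (p : V × Fin k) :
    coronaColoring G c k s(inr p, inl u) = spokeColor G c k p :=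
  rfl

@[simp]
theorem coronaColoring_inr_inr (p q : V × Fin k) :
    coronaColoring G c k s(inr p, inr q) = max (spokeColor G c k p) (spokeColor G c k q) - 1 :=
  rfl

theorem mem_colorsAt_corona_inl {v : V} {z : ℤ} :
    z ∈ colorsAt (corona G (pathGraph k)) (coronaColoring G c k) (inl v) ↔
      z ∈ colorsAt G c v ∨ (z < minColor G c v ∧ 2 * (minColor G c v - 1 - z) < k) := by
  constructor
  · rintro ⟨u | ⟨w, i⟩, hadj, rfl⟩
    · exact Or.inl ⟨u, hadj, rfl⟩
    · obtain rfl : v = w := hadj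
      simp only [coronaColoring_inl_inr, spokeColor]
      omega
  · rintro (⟨u, hadj, rfl⟩ | ⟨hlt, hk⟩)
    · exact ⟨inl u, hadj, rfl⟩
    · refine ⟨inr (v, ⟨2 * (minColor G c v - 1 - z).toNat, by omega⟩), rfl, ?_⟩
      simp only [coronaColoring_inl_inr, spokeColor]
      omega

theorem coronaColoring_inr_eq_or {p : V × Fin k} {u : V ⊕ V × Fin k}
    (h : (corona G (pathGraph k)).Adj (inr p) u) :
    coronaColoring G c k s(inr p, u) = spokeColor G c k p ∨
      coronaColoring G c k s(inr p, u) = spokeColor G c k p - 1 := by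
  rcases u with w | q
  · exact Or.inl rfl
  · simp only [corona_adj_inr_inr, pathGraph_adj] at h
    simp only [coronaColoring_inr_inr, spokeColor, h.1]
    omega

theorem ncard_corona_inr_le (p : V × Fin k) (q : ℤ) :
    {u | (corona G (pathGraph k)).Adj (inr p) u ∧ coronaColoring G c k s(inr p, u) = q}.ncard ≤
      2 := by
  obtain ⟨v, i⟩ := p
  -- two neighbors of the same color never lie on the same side of `i` along the path
  refine Set.ncard_le_two_of_injOn_bool
    (f := Sum.elim (fun _ => false) (fun r : V × Fin k => decide (r.2 < i))) ?_
  rintro (u | ⟨w, j⟩) ⟨hu, hcu⟩ (u' | ⟨w', j'⟩) ⟨hu', hcu'⟩ hkey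
  all_goals simp only [corona_adj_inr_inl, corona_adj_inr_inr, pathGraph_adj] at hu hu'
  all_goals simp only [coronaColoring_inr_inl, coronaColoring_inr_inr, spokeColor, Sum.elim_inl,
    Sum.elim_inr, false_eq_decide_iff, decide_eq_false_iff_not, decide_eq_decide] at hcu hcu' hkey
  · rw [hu, hu']
  · obtain ⟨rfl, hj'⟩ := hu'
    omega
  · obtain ⟨rfl, hj⟩ := hu
    omega
  · obtain ⟨rfl, hj⟩ := hu
    obtain ⟨rfl, hj'⟩ := hu'
    obtain rfl : j = j' := Fin.ext (by omega)
    rfl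

variable [Finite V]

theorem isIntervalColoring_corona (hc : IsIntervalColoring G c) :
    IsIntervalColoring (corona G (pathGraph k)) (coronaColoring G c k) := by
  rw [isIntervalColoring_iff_ordConnected] at hc ⊢
  rintro (v | p) <;> refine ⟨fun x hx y hy z ⟨hxz, hzy⟩ => ?_⟩
  · rw [mem_colorsAt_corona_inl] at hx hy ⊢
    by_cases hza : minColor G c v ≤ z
    · have hyG : y ∈ colorsAt G c v := hy.resolve_right (by omega)
      exact Or.inl ((hc v).out (minColor_mem ⟨y, hyG⟩) hyG ⟨hza, hzy⟩)
    · have hxG : x ∉ colorsAt G c v := fun hxG => hza (minColor_le hxG |>.trans hxz)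
      have := hx.resolve_left hxG
      omega
  · rw [mem_colorsAt] at hx hy ⊢
    obtain ⟨u, hu, rfl⟩ := hx
    obtain ⟨w, hw, rfl⟩ := hy
    have := coronaColoring_inr_eq_or (c := c) hu
    have := coronaColoring_inr_eq_or (c := c) hw
    obtain rfl | rfl : z = coronaColoring G c k s(inr p, u) ∨
        z = coronaColoring G c k s(inr p, w) := by omega
    exacts [⟨u, hu, rfl⟩, ⟨w, hw, rfl⟩]

theorem ncard_corona_inl_le {μ : ℕ} (hμ : IsKImproper G c μ) (v : V) (q : ℤ) :
    {u | (corona G (pathGraph k)).Adj (inl v) u ∧ coronaColoring G c k s(inl v, u) = q}.ncard ≤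
      max 2 μ := by
  by_cases hq : minColor G c v ≤ q
  · have hsub : {u | (corona G (pathGraph k)).Adj (inl v) u ∧
        coronaColoring G c k s(inl v, u) = q} ⊆ inl '' {u | G.Adj v u ∧ c s(v, u) = q} := by
      rintro (u | ⟨w, i⟩) ⟨hadj, hcol⟩
      · exact ⟨u, ⟨hadj, hcol⟩, rfl⟩
      · obtain rfl : v = w := hadj
        simp only [coronaColoring_inl_inr, spokeColor] at hcol
        omega
    calc _ ≤ (inl '' {u | G.Adj v u ∧ c s(v, u) = q}).ncard := Set.ncard_le_ncard hsub
      _ = _ := Set.ncard_image_of_injective _ inl_injective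
      _ ≤ μ := hμ v q
      _ ≤ max 2 μ := le_max_right _ _
  · -- below `minColor G c v` only spokes are used, each color by two of opposite parity
    refine (Set.ncard_le_two_of_injOn_bool
      (f := Sum.elim (fun _ => true) (fun p : V × Fin k => decide ((p.2 : ℕ) % 2 = 0)))
      ?_).trans (le_max_left _ _)
    rintro (u | ⟨w, i⟩) ⟨hu, hcu⟩ (u' | ⟨w', j⟩) ⟨hu', hcu'⟩ hkey
    all_goals simp only [corona_adj_inl_inl, corona_adj_inl_inr] at hu hu'
    · exact absurd (hcu ▸ minColor_le ⟨u, hu, rfl⟩) hq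
    · exact absurd (hcu ▸ minColor_le ⟨u, hu, rfl⟩) hq
    · exact absurd (hcu' ▸ minColor_le ⟨u', hu', rfl⟩) hq
    · subst hu hu'
      simp only [coronaColoring_inl_inr, spokeColor, Sum.elim_inr, decide_eq_decide]
        at hcu hcu' hkey
      obtain rfl : i = j := Fin.ext (by omega)
      rfl

theorem isKImproper_corona {μ : ℕ} (hμ : IsKImproper G c μ) :
    IsKImproper (corona G (pathGraph k)) (coronaColoring G c k) (max 2 μ)
  | inl v, q => ncard_corona_inl_le hμ v q
  | inr p, q => (ncard_corona_inr_le p q).trans (le_max_left _ _)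

end CoronaPath

theorem stmt12_general {V : Type*} [Fintype V] (G : SimpleGraph V) (k : ℕ) :
    impropriety (corona G (SimpleGraph.pathGraph k)) ≤ max 2 (impropriety G) := by
  obtain ⟨c, hc, hμ⟩ := exists_isIntervalColoring_isKImproper_impropriety G
  exact impropriety_le (isIntervalColoring_corona hc) (isKImproper_corona hμ)

/-- For any graph `G` and any `k ≥ 1`, `μ_int(G ⊙ P_k) ≤ max {2, μ_int(G)}`. -/
theorem stmt12 {V : Type*} [Fintype V] (G : SimpleGraph V) (k : ℕ) (hk : 1 ≤ k) :
    impropriety (corona G (SimpleGraph.pathGraph k)) ≤ max 2 (impropriety G) :=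
  stmt12_general G k
end
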